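/- The number of achievable permutations of length n for two stacks in series is at most the number of operation sequences of length 3n, i.e., s_n ≤ 2·(3n)!/(n!·(n+1)!·(n+2)!); in particular s_n ≤ 27^n. -/

import Mathlib

namespace TwoStacks

/-- A state of the two-stacks-in-series machine: remaining input,
stack 1, stack 2 (tops at the head), and the output so far. -/
structure St where
  inp : List ℕ
  s1 : List ℕ
  s2 : List ℕ
  out : List ℕ
deriving DecidableEq

/-- The three moves. -/
inductive Mv
  | rho  -- input → stack 1
  | lam  -- stack 1 → stack 2
  | mu   -- stack 2 → output
deriving DecidableEq

/-- One move of the machine (`none` if the move is not applicable). -/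
def step : Mv → St → Option St
  | .rho, ⟨x :: xs, s1, s2, o⟩ => some ⟨xs, x :: s1, s2, o⟩
  | .lam, ⟨i, x :: xs, s2, o⟩ => some ⟨i, xs, x :: s2, o⟩
  | .mu,  ⟨i, s1, x :: xs, o⟩ => some ⟨i, s1, xs, o ++ [x]⟩
  | _, _ => none

/-- Run a word of moves on a state. -/
def run (w : List Mv) (s : St) : Option St :=
  w.foldlM (fun s m => step m s) s

/-- The list 1,2,…,n. -/
def idSeq (n : ℕ) : List ℕ := (List.range n).map (· + 1)

/-- The one-line notation p(1),…,p(n) (values in {1,…,n}) of a permutation. -/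
def permList {n : ℕ} (p : Equiv.Perm (Fin n)) : List ℕ :=
  List.ofFn fun i => (p i : ℕ) + 1

/-- p is achievable: from input 1,…,n some word of moves outputs p(1),…,p(n). -/
def Achievable {n : ℕ} (p : Equiv.Perm (Fin n)) : Prop :=
  ∃ w, run w ⟨idSeq n, [], [], []⟩ = some ⟨[], [], [], permList p⟩

/-- p is sortable: from input p(1),…,p(n) some word of moves outputs 1,…,n. -/
def Sortable {n : ℕ} (p : Equiv.Perm (Fin n)) : Prop :=
  ∃ w, run w ⟨permList p, [], [], []⟩ = some ⟨[], [], [], idSeq n⟩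

/-- A list of (distinct) naturals is achievable as an output. -/
def AchList (l : List ℕ) : Prop :=
  ∃ w, run w ⟨idSeq l.length, [], [], []⟩ = some ⟨[], [], [], l⟩

/-- Standardization (pattern) of a list with distinct entries:
each entry is replaced by its rank (1-based). -/
def std (l : List ℕ) : List ℕ :=
  l.map fun x => (l.filter (· ≤ x)).length

/-- An operation sequence of length 3n: n of each letter, and every
prefix has #ρ ≥ #λ ≥ #μ. -/
def OpSeq (n : ℕ) (w : List Mv) : Prop :=
  w.length = 3 * n ∧ w.count .rho = n ∧ w.count .lam = n ∧ w.count .mu = n ∧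
  ∀ u, u <+: w → u.count .mu ≤ u.count .lam ∧ u.count .lam ≤ u.count .rho

/-- An x,y-Catalan word: word over {x,y} with equally many x's and y's
in which every prefix has at least as many x's as y's. -/
def CatWord (x y : Mv) (w : List Mv) : Prop :=
  (∀ m ∈ w, m = x ∨ m = y) ∧ w.count x = w.count y ∧
  ∀ u, u <+: w → u.count y ≤ u.count x

/-- Two words have the same effect: applied to any state on which both
are applicable, they give the same resulting state. -/
def SameEffect (v v' : List Mv) : Prop :=
  ∀ s t t', run v s = some t → run v' s = some t' → t = t'

/-- Rank of a letter for the order ρ < λ < μ. -/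
def rk : Mv → ℕ
  | .rho => 0
  | .lam => 1
  | .mu => 2

/-- The order ρ < λ < μ on letters. -/
def mlt (a b : Mv) : Prop := rk a < rk b

/-- Lexicographic order on words induced by ρ < λ < μ. -/
def wordLt (v v' : List Mv) : Prop := List.Lex mlt v v'

/-- No entry is immediately followed by its successor. -/
def IncAvoid (l : List ℕ) : Prop :=
  ∀ j (h : j + 1 < l.length), l.get ⟨j + 1, h⟩ ≠ l.get ⟨j, by omega⟩ + 1

lemma run_nil (s : St) : run [] s = some s := rfl

lemma run_cons (m : Mv) (w : List Mv) (s : St) :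
    run (m :: w) s = (step m s).bind (run w) := by
  simp [run, List.foldlM_cons]; rfl

lemma length_counts (l : List Mv) :
    l.length = l.count .rho + l.count .lam + l.count .mu := by
  induction l with
  | nil => simp
  | cons m l ih => cases m <;> simp [List.count_cons, ih] <;> omega

lemma run_lens : ∀ (w : List Mv) (s t : St), run w s = some t →
    t.inp.length + w.count .rho = s.inp.length ∧
    t.s1.length + w.count .lam = s.s1.length + w.count .rho ∧
    t.s2.length + w.count .mu = s.s2.length + w.count .lam ∧
    t.out.length = s.out.length + w.count .mu := by
  intro w
  induction w with
  | nil => intro s t h; rw [run_nil] at h; cases h; simp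
  | cons m w ih =>
    intro s t h
    rw [run_cons] at h
    obtain ⟨s', hstep, hrun⟩ := Option.bind_eq_some_iff.mp h
    obtain ⟨i, s1, s2, o⟩ := s
    have := ih s' t hrun
    cases m
    · cases i with
      | nil => simp [step] at hstep
      | cons x xs =>
        simp only [step, Option.some.injEq] at hstep
        subst hstep
        simp only [List.count_cons] at *
        simp at *
        omega
    · cases s1 with
      | nil => simp [step] at hstep
      | cons x xs =>
        simp only [step, Option.some.injEq] at hstep
        subst hstep
        simp only [List.count_cons] at *
        simp at *
        omega
    · cases s2 with
      | nil => simp [step] at hstep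
      | cons x xs =>
        simp only [step, Option.some.injEq] at hstep
        subst hstep
        simp only [List.count_cons] at *
        simp at *
        omega

lemma run_pfx : ∀ (w : List Mv) (s t : St), run w s = some t → ∀ u, u <+: w →
    u.count .rho ≤ s.inp.length ∧
    u.count .lam ≤ s.s1.length + u.count .rho ∧
    u.count .mu ≤ s.s2.length + u.count .lam := by
  intro w
  induction w with
  | nil =>
    intro s t h u hu
    rw [List.prefix_nil] at hu
    subst hu; simp
  | cons m w ih =>
    intro s t h u hu
    rw [run_cons] at h
    obtain ⟨s', hstep, hrun⟩ := Option.bind_eq_some_iff.mp h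
    obtain ⟨i, s1, s2, o⟩ := s
    cases u with
    | nil => simp
    | cons m0 u =>
      rw [List.cons_prefix_cons] at hu
      obtain ⟨rfl, hu⟩ := hu
      cases m0
      · cases i with
        | nil => simp [step] at hstep
        | cons x xs =>
          simp only [step, Option.some.injEq] at hstep
          subst hstep
          have := ih _ t hrun u hu
          simp only [List.count_cons] at *
          simp at *
          omega
      · cases s1 with
        | nil => simp [step] at hstep
        | cons x xs =>
          simp only [step, Option.some.injEq] at hstep
          subst hstep
          have := ih _ t hrun u hu
          simp only [List.count_cons] at *
          simp at *
          omega
      · cases s2 with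
        | nil => simp [step] at hstep
        | cons x xs =>
          simp only [step, Option.some.injEq] at hstep
          subst hstep
          have := ih _ t hrun u hu
          simp only [List.count_cons] at *
          simp at *
          omega


/-- prefix condition, decidably. -/
def pcond (w : List Mv) : Prop :=
  ∀ u ∈ w.inits, u.count Mv.mu ≤ u.count Mv.lam ∧ u.count Mv.lam ≤ u.count Mv.rho

instance : DecidablePred pcond := fun w => List.decidableBAll _ w.inits

/-- all operation-sequence-like words with given letter counts. -/
def WF (a b c : ℕ) : Finset (List Mv) :=
  ((List.replicate a Mv.rho ++ (List.replicate b Mv.lam ++ List.replicate c Mv.mu)).permutations.filter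
    fun w => decide (pcond w)).toFinset

lemma mem_WF {a b c : ℕ} {w : List Mv} :
    w ∈ WF a b c ↔ (w.count Mv.rho = a ∧ w.count Mv.lam = b ∧ w.count Mv.mu = c) ∧ pcond w := by
  rw [WF, List.mem_toFinset, List.mem_filter, List.mem_permutations, List.perm_iff_count,
    decide_eq_true_eq]
  constructor
  · rintro ⟨hc, hp⟩
    refine ⟨⟨?_, ?_, ?_⟩, hp⟩
    · have := hc Mv.rho; simpa [List.count_replicate] using this
    · have := hc Mv.lam; simpa [List.count_replicate] using this
    · have := hc Mv.mu; simpa [List.count_replicate] using this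
  · rintro ⟨⟨h1, h2, h3⟩, hp⟩
    refine ⟨?_, hp⟩
    intro x
    cases x <;> simp [List.count_replicate, h1, h2, h3]

lemma mem_WF_le {a b c : ℕ} {w : List Mv} (h : w ∈ WF a b c) : c ≤ b ∧ b ≤ a := by
  rw [mem_WF] at h
  obtain ⟨⟨h1, h2, h3⟩, hp⟩ := h
  have := hp w (by rw [List.mem_inits])
  omega

lemma WF_zero : WF 0 0 0 = {[]} := by
  ext w
  rw [mem_WF, Finset.mem_singleton]
  constructor
  · rintro ⟨⟨h1, h2, h3⟩, -⟩
    have := length_counts w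
    rw [h1, h2, h3] at this
    exact List.eq_nil_of_length_eq_zero (by omega)
  · rintro rfl
    refine ⟨⟨rfl, rfl, rfl⟩, ?_⟩
    intro u hu
    rw [List.mem_inits, List.prefix_nil] at hu
    subst hu; simp

lemma WF_rec (a b c : ℕ) (h0 : a + b + c ≠ 0) (hab : b ≤ a) (hbc : c ≤ b) :
    WF a b c =
      ((if b < a then (WF (a - 1) b c).image (· ++ [Mv.rho]) else ∅) ∪
        (if c < b then (WF a (b - 1) c).image (· ++ [Mv.lam]) else ∅)) ∪
      (if 0 < c then (WF a b (c - 1)).image (· ++ [Mv.mu]) else ∅) := by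
  ext w
  simp only [Finset.mem_union]
  constructor
  · intro hw
    have hle := mem_WF_le hw
    rw [mem_WF] at hw
    obtain ⟨⟨h1, h2, h3⟩, hp⟩ := hw
    have hlen : w.length ≠ 0 := by rw [length_counts]; omega
    obtain ⟨v, m, rfl⟩ : ∃ v m, w = v ++ [m] := by
      rcases List.eq_nil_or_concat' w with h | ⟨v, m, h⟩
      · exact absurd (by simp [h]) hlen
      · exact ⟨v, m, h⟩
    have hpv : pcond v := by
      intro u hu
      rw [List.mem_inits] at hu
      exact hp u (by rw [List.mem_inits]; exact hu.trans (List.prefix_append _ _))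
    have hvle : v.count Mv.mu ≤ v.count Mv.lam ∧ v.count Mv.lam ≤ v.count Mv.rho :=
      hpv v (by rw [List.mem_inits])
    cases m
    · refine Or.inl (Or.inl ?_)
      simp only [List.count_append, List.count_cons, List.count_nil] at h1 h2 h3
      simp at h1 h2 h3
      rw [if_pos (by omega)]
      rw [Finset.mem_image]
      exact ⟨v, mem_WF.mpr ⟨⟨by omega, by omega, by omega⟩, hpv⟩, rfl⟩
    · refine Or.inl (Or.inr ?_)
      simp only [List.count_append, List.count_cons, List.count_nil] at h1 h2 h3
      simp at h1 h2 h3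
      rw [if_pos (by omega)]
      rw [Finset.mem_image]
      exact ⟨v, mem_WF.mpr ⟨⟨by omega, by omega, by omega⟩, hpv⟩, rfl⟩
    · refine Or.inr ?_
      simp only [List.count_append, List.count_cons, List.count_nil] at h1 h2 h3
      simp at h1 h2 h3
      rw [if_pos (by omega)]
      rw [Finset.mem_image]
      exact ⟨v, mem_WF.mpr ⟨⟨by omega, by omega, by omega⟩, hpv⟩, rfl⟩
  · intro hw
    have pkey : ∀ (x : Mv) (v : List Mv), pcond v →
        (v ++ [x]).count Mv.mu ≤ (v ++ [x]).count Mv.lam →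
        (v ++ [x]).count Mv.lam ≤ (v ++ [x]).count Mv.rho →
        pcond (v ++ [x]) := by
      intro x v hpv hlast1 hlast2
      intro u hu
      rw [List.mem_inits, List.prefix_concat_iff] at hu
      rcases hu with rfl | hu
      · exact ⟨hlast1, hlast2⟩
      · exact hpv u (by rw [List.mem_inits]; exact hu)
    rcases hw with (hw | hw) | hw
    · rcases lt_or_ge b a with hba | hba
      swap
      · rw [if_neg (by omega)] at hw; simp at hw
      rw [if_pos hba, Finset.mem_image] at hw
      obtain ⟨v, hv, rfl⟩ := hw
      have hle := mem_WF_le hv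
      obtain ⟨⟨e1, e2, e3⟩, hpv⟩ := mem_WF.mp hv
      rw [mem_WF]
      constructor
      · refine ⟨?_, ?_, ?_⟩ <;> simp [List.count_append, List.count_cons] <;> omega
      · apply pkey _ _ hpv <;> simp [List.count_append, List.count_cons] <;> omega
    · rcases lt_or_ge c b with hcb | hcb
      swap
      · rw [if_neg (by omega)] at hw; simp at hw
      rw [if_pos hcb, Finset.mem_image] at hw
      obtain ⟨v, hv, rfl⟩ := hw
      have hle := mem_WF_le hv
      obtain ⟨⟨e1, e2, e3⟩, hpv⟩ := mem_WF.mp hv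
      rw [mem_WF]
      constructor
      · refine ⟨?_, ?_, ?_⟩ <;> simp [List.count_append, List.count_cons] <;> omega
      · apply pkey _ _ hpv <;> simp [List.count_append, List.count_cons] <;> omega
    · rcases Nat.eq_zero_or_pos c with hc0 | hc0
      · rw [if_neg (by omega)] at hw; simp at hw
      rw [if_pos hc0, Finset.mem_image] at hw
      obtain ⟨v, hv, rfl⟩ := hw
      have hle := mem_WF_le hv
      obtain ⟨⟨e1, e2, e3⟩, hpv⟩ := mem_WF.mp hv
      rw [mem_WF]
      constructor
      · refine ⟨?_, ?_, ?_⟩ <;> simp [List.count_append, List.count_cons] <;> omega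
      · apply pkey _ _ hpv <;> simp [List.count_append, List.count_cons] <;> omega


def N (a b c : ℕ) : ℕ := (WF a b c).card

lemma N_zero : N 0 0 0 = 1 := by rw [N, WF_zero]; rfl

lemma dj_images (s t : Finset (List Mv)) (x y : Mv) (hxy : x ≠ y) :
    Disjoint (s.image (· ++ [x])) (t.image (· ++ [y])) := by
  rw [Finset.disjoint_left]
  rintro w hw hw'
  simp only [Finset.mem_image] at hw hw'
  obtain ⟨v, -, rfl⟩ := hw
  obtain ⟨v', -, h⟩ := hw'
  apply hxy
  have := congrArg List.getLast? h
  simpa using this.symm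

lemma card_tri (A B C : Finset (List Mv)) :
    ((A.image (· ++ [Mv.rho]) ∪ B.image (· ++ [Mv.lam])) ∪ C.image (· ++ [Mv.mu])).card
      = A.card + B.card + C.card := by
  rw [Finset.card_union_of_disjoint, Finset.card_union_of_disjoint]
  · rw [Finset.card_image_of_injective _ (List.append_left_injective _),
      Finset.card_image_of_injective _ (List.append_left_injective _),
      Finset.card_image_of_injective _ (List.append_left_injective _)]
  · exact dj_images _ _ _ _ (by simp)
  · rw [Finset.disjoint_union_left]
    exact ⟨dj_images _ _ _ _ (by simp), dj_images _ _ _ _ (by simp)⟩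

lemma N_rec (a b c : ℕ) (h0 : a + b + c ≠ 0) (hab : b ≤ a) (hbc : c ≤ b) :
    N a b c = (if b < a then N (a - 1) b c else 0) +
      (if c < b then N a (b - 1) c else 0) + (if 0 < c then N a b (c - 1) else 0) := by
  have him : ∀ (P : Prop) [Decidable P] (s : Finset (List Mv)) (x : Mv),
      (if P then s.image (· ++ [x]) else ∅) = (if P then s else ∅).image (· ++ [x]) := by
    intro P _ s x
    split_ifs <;> simp
  rw [N, WF_rec a b c h0 hab hbc, him, him, him, card_tri]
  congr 1
  · congr 1
    · split_ifs <;> simp [N]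
    · split_ifs <;> simp [N]
  · split_ifs <;> simp [N]

lemma N_closed : ∀ t c j i, 3 * c + 2 * j + i = t →
    (N (c + j + i) (c + j) c : ℚ) *
        (((c + j + i + 2).factorial : ℚ) * (((c + j + 1).factorial : ℚ) * (c.factorial : ℚ))) =
      ((3 * c + 2 * j + i).factorial : ℚ) * ((i + 1) * ((j + 1) * (i + j + 2))) := by
  intro t
  induction t using Nat.strong_induction_on with
  | _ t IH =>
    intro c j i ht
    rcases t with _ | t'
    · obtain ⟨rfl, rfl, rfl⟩ : c = 0 ∧ j = 0 ∧ i = 0 := by omega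
      norm_num [N_zero, Nat.factorial]
    · -- t = t' + 1
      have hrec := N_rec (c + j + i) (c + j) c (by omega) (by omega) (by omega)
      have e1 : ((if c + j < c + j + i then N (c + j + i - 1) (c + j) c else 0 : ℕ) : ℚ) *
          (((c + j + i + 2).factorial : ℚ) * (((c + j + 1).factorial : ℚ) * (c.factorial : ℚ))) =
          (t'.factorial : ℚ) * ((c + j + i + 2) * (i * ((j + 1) * (i + j + 1)))) := by
        rcases i with _ | i'
        · simp
        · rw [if_pos (by omega)]
          have hI := IH t' (by omega) c j i' (by omega)
          rw [show 3 * c + 2 * j + i' = t' by omega] at hI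
          rw [show c + j + (i' + 1) - 1 = c + j + i' by omega,
            show c + j + (i' + 1) + 2 = (c + j + i' + 2) + 1 by omega,
            Nat.factorial_succ (c + j + i' + 2)]
          push_cast at hI ⊢
          linear_combination ((c : ℚ) + j + i' + 2 + 1) * hI
      have e2 : ((if c < c + j then N (c + j + i) (c + j - 1) c else 0 : ℕ) : ℚ) *
          (((c + j + i + 2).factorial : ℚ) * (((c + j + 1).factorial : ℚ) * (c.factorial : ℚ))) =
          (t'.factorial : ℚ) * ((c + j + 1) * ((i + 2) * (j * (i + j + 2)))) := by
        rcases j with _ | j'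
        · simp
        · rw [if_pos (by omega)]
          have hI := IH t' (by omega) c j' (i + 1) (by omega)
          rw [show 3 * c + 2 * j' + (i + 1) = t' by omega] at hI
          rw [show c + j' + (i + 1) = c + (j' + 1) + i by omega] at hI
          rw [show c + (j' + 1) - 1 = c + j' by omega,
            show c + (j' + 1) + 1 = (c + j' + 1) + 1 by omega,
            Nat.factorial_succ (c + j' + 1)]
          push_cast at hI ⊢
          linear_combination ((c : ℚ) + j' + 1 + 1) * hI
      have e3 : ((if 0 < c then N (c + j + i) (c + j) (c - 1) else 0 : ℕ) : ℚ) *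
          (((c + j + i + 2).factorial : ℚ) * (((c + j + 1).factorial : ℚ) * (c.factorial : ℚ))) =
          (t'.factorial : ℚ) * (c * ((i + 1) * ((j + 2) * (i + j + 3)))) := by
        rcases c with _ | c'
        · simp
        · rw [if_pos (by omega)]
          have hI := IH t' (by omega) c' (j + 1) i (by omega)
          rw [show 3 * c' + 2 * (j + 1) + i = t' by omega] at hI
          rw [show c' + (j + 1) + i = c' + 1 + j + i by omega] at hI
          rw [show c' + (j + 1) + 1 = c' + 1 + j + 1 by omega] at hI
          rw [show c' + (j + 1) = c' + 1 + j by omega] at hI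
          rw [show c' + 1 - 1 = c' by omega, Nat.factorial_succ c']
          push_cast at hI ⊢
          linear_combination ((c' : ℚ) + 1) * hI
      rw [hrec]
      push_cast
      rw [show 3 * c + 2 * j + i = t' + 1 from ht, Nat.factorial_succ t']
      have hC : (t' : ℚ) + 1 = 3 * c + 2 * j + i := by
        exact_mod_cast ht.symm
      push_cast at e1 e2 e3 ⊢
      linear_combination e1 + e2 + e3 -
        (t'.factorial : ℚ) * ((i + 1) * ((j + 1) * (i + j + 2))) * hC


instance : Fintype Mv := ⟨{Mv.rho, Mv.lam, Mv.mu}, fun x => by cases x <;> simp⟩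

lemma card_Mv : Fintype.card Mv = 3 := rfl

lemma permList_inj {n : ℕ} {p q : Equiv.Perm (Fin n)} (h : permList p = permList q) : p = q := by
  rw [permList, permList, List.ofFn_inj] at h
  apply Equiv.ext
  intro x
  have := congrFun h x
  exact Fin.ext (by omega)

lemma witness_mem {n : ℕ} {w : List Mv} {out : List ℕ} (hout : out.length = n)
    (hw : run w ⟨idSeq n, [], [], []⟩ = some ⟨[], [], [], out⟩) : w ∈ WF n n n := by
  have hid : (idSeq n).length = n := by simp [idSeq]
  obtain ⟨h1, h2, h3, h4⟩ := run_lens w _ _ hw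
  simp only [hid, hout] at h1 h2 h3 h4
  simp at h1 h2 h3 h4
  rw [mem_WF]
  refine ⟨⟨by omega, by omega, by omega⟩, ?_⟩
  intro u hu
  rw [List.mem_inits] at hu
  obtain ⟨g1, g2, g3⟩ := run_pfx w _ _ hw u hu
  simp only [hid] at g1 g2 g3
  simp at g2 g3
  omega

lemma NW : N n n n * (n.factorial * (n + 1).factorial * (n + 2).factorial)
    = 2 * (3 * n).factorial := by
  have h := N_closed (3 * n) n 0 0 (by ring)
  norm_num at h
  have hq : ((N n n n * (n.factorial * (n + 1).factorial * (n + 2).factorial) : ℕ) : ℚ)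
      = ((2 * (3 * n).factorial : ℕ) : ℚ) := by
    push_cast
    linear_combination h
  exact_mod_cast hq

def toVec (L : ℕ) (w : List Mv) : List.Vector Mv L :=
  ⟨w.take L ++ List.replicate (L - w.length) Mv.rho, by
    rw [List.length_append, List.length_take, List.length_replicate]; omega⟩

lemma N_le_27 (n : ℕ) : N n n n ≤ 27 ^ n := by
  classical
  have hlen : ∀ w ∈ WF n n n, w.length = 3 * n := by
    intro w hw
    obtain ⟨⟨h1, h2, h3⟩, -⟩ := mem_WF.mp hw
    rw [length_counts, h1, h2, h3]; ring
  have hcard : (WF n n n).card ≤ Fintype.card (List.Vector Mv (3 * n)) := by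
    rw [← Finset.card_univ]
    apply Finset.card_le_card_of_injOn (toVec (3 * n))
    · intro w _; exact Finset.mem_univ _
    · intro w1 hw1 w2 hw2 heq
      have l1 := hlen w1 hw1
      have l2 := hlen w2 hw2
      have hv : w1.take (3 * n) ++ List.replicate (3 * n - w1.length) Mv.rho =
          w2.take (3 * n) ++ List.replicate (3 * n - w2.length) Mv.rho :=
        congrArg Subtype.val heq
      rw [List.take_of_length_le (by omega), List.take_of_length_le (by omega),
        l1, l2, Nat.sub_self] at hv
      simpa using hv
  calc N n n n ≤ Fintype.card (List.Vector Mv (3 * n)) := hcard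
    _ = 3 ^ (3 * n) := by rw [card_vector, card_Mv]
    _ = 27 ^ n := by rw [pow_mul]; norm_num


theorem achievable_count_le (n : ℕ) :
    Nat.card {p : Equiv.Perm (Fin n) // Achievable p} ≤
      2 * (3 * n).factorial /
        (n.factorial * (n + 1).factorial * (n + 2).factorial) ∧
    Nat.card {p : Equiv.Perm (Fin n) // Achievable p} ≤ 27 ^ n := by
  classical
  have hmemW : ∀ (p : Equiv.Perm (Fin n)) (hp : Achievable p), hp.choose ∈ WF n n n := by
    intro p hp
    exact witness_mem (by simp [permList]) hp.choose_spec
  have hcard : Nat.card {p : Equiv.Perm (Fin n) // Achievable p} ≤ N n n n := by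
    have hf : Function.Injective
        (fun x : {p : Equiv.Perm (Fin n) // Achievable p} =>
          (⟨x.2.choose, hmemW x.1 x.2⟩ : {w // w ∈ WF n n n})) := by
      rintro ⟨p, hp⟩ ⟨q, hq⟩ h
      have h' : hp.choose = hq.choose := congrArg Subtype.val h
      have s1 := hp.choose_spec
      have s2 := hq.choose_spec
      rw [← h'] at s2
      rw [s1] at s2
      simp only [Option.some.injEq, St.mk.injEq] at s2
      exact Subtype.ext (permList_inj s2.2.2.2)
    calc Nat.card {p : Equiv.Perm (Fin n) // Achievable p}
        ≤ Nat.card {w // w ∈ WF n n n} := Nat.card_le_card_of_injective _ hf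
      _ = N n n n := by rw [Nat.card_eq_fintype_card, Fintype.card_coe, N]
  constructor
  · have hdiv : 2 * (3 * n).factorial /
        (n.factorial * (n + 1).factorial * (n + 2).factorial) = N n n n := by
      apply Nat.div_eq_of_eq_mul_left
      · positivity
      · exact (NW).symm
    rw [hdiv]
    exact hcard
  · exact le_trans hcard (N_le_27 n)

end TwoStacks
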